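/- arXiv:math/0509260 — 7 statements merged into one kernel-verified Lean document; each statement's English description precedes it below -/
import Mathlib

section
/- For any two orderings (i_1,…,i_n) and (j_1,…,j_n) of {1,…,n}, the polynomials (t − x_{A_n,i_n})(t − x_{A_{n-1},i_{n-1}})⋯(t − x_{A_1,i_1}) and (t − x_{B_n,j_n})(t − x_{B_{n-1},j_{n-1}})⋯(t − x_{B_1,j_1}) in Q_n[t] are equal, where A_k = {i_1,…,i_{k-1}} and B_k = {j_1,…,j_{k-1}} (with A_1 = B_1 = ∅). Hence the polynomial 𝒫(t) ∈ Q_n[t] is well defined, independent of the ordering of {1,…,n}. -/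
/-!
Swapping two adjacent letters of an ordering changes only two consecutive factors of the product,
namely `(t - x_{A ∪ {i}, j}) (t - x_{A, i})` becomes `(t - x_{A ∪ {j}, i}) (t - x_{A, j})`.
Both quadratics equal `t² - (x_{A∪{i},j} + x_{A,i}) t + x_{A∪{i},j} x_{A,i}`, and the defining
relations of `Qₙ` say precisely that these coefficients do not depend on the order of `i, j`.
Since adjacent transpositions generate the symmetric group, the product is independent of the
ordering.
-/

open Polynomial

/-- Generators of the algebra `Qₙ`: pairs `(A, i)` with `A ⊆ {1,…,n}`, `i ∉ A`. -/
def QGen (n : ℕ) : Type := {p : Finset (Fin n) × Fin n // p.2 ∉ p.1}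

theorem notmem_insert {n : ℕ} {A : Finset (Fin n)} {i j : Fin n}
    (hj : j ∉ A) (hij : j ≠ i) : j ∉ insert i A :=
  fun h => (Finset.mem_insert.mp h).elim hij hj

/-- The generator `x_{A,i}` inside the free algebra. -/
def fgen (F : Type*) [Field F] (n : ℕ) (A : Finset (Fin n)) (i : Fin n) (h : i ∉ A) :
    FreeAlgebra F (QGen n) :=
  FreeAlgebra.ι F ⟨(A, i), h⟩

/-- The defining relations of `Qₙ`:
`x_{A∪{i},j} + x_{A,i} = x_{A∪{j},i} + x_{A,j}` and
`x_{A∪{i},j} · x_{A,i} = x_{A∪{j},i} · x_{A,j}`. -/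
inductive QRel (F : Type*) [Field F] (n : ℕ) :
    FreeAlgebra F (QGen n) → FreeAlgebra F (QGen n) → Prop
  | add (A : Finset (Fin n)) (i j : Fin n) (hi : i ∉ A) (hj : j ∉ A) (hij : i ≠ j) :
      QRel F n (fgen F n (insert i A) j (notmem_insert hj (Ne.symm hij)) + fgen F n A i hi)
        (fgen F n (insert j A) i (notmem_insert hi hij) + fgen F n A j hj)
  | mul (A : Finset (Fin n)) (i j : Fin n) (hi : i ∉ A) (hj : j ∉ A) (hij : i ≠ j) :
      QRel F n (fgen F n (insert i A) j (notmem_insert hj (Ne.symm hij)) * fgen F n A i hi)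
        (fgen F n (insert j A) i (notmem_insert hi hij) * fgen F n A j hj)

/-- The universal algebra of pseudo-roots `Qₙ`. -/
def Q (F : Type*) [Field F] (n : ℕ) : Type _ := RingQuot (QRel F n)

noncomputable instance (F : Type*) [Field F] (n : ℕ) : Ring (Q F n) :=
  inferInstanceAs (Ring (RingQuot (QRel F n)))

noncomputable instance (F : Type*) [Field F] (n : ℕ) : Algebra F (Q F n) :=
  inferInstanceAs (Algebra F (RingQuot (QRel F n)))

/-- The pseudo-root `x_{A,i}` in `Qₙ`. -/
noncomputable def xgen (F : Type*) [Field F] (n : ℕ) (A : Finset (Fin n)) (i : Fin n)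
    (h : i ∉ A) : Q F n :=
  RingQuot.mkAlgHom F (QRel F n) (fgen F n A i h)

theorem sigma_notmem {n : ℕ} (σ : Equiv.Perm (Fin n)) (k : Fin n) :
    σ k ∉ (Finset.Iio k).image σ := by
  simp only [Finset.mem_image, Finset.mem_Iio, not_exists, not_and]
  intro a ha h
  exact absurd (σ.injective h) (ne_of_lt ha)

/-- The polynomial `𝒫(t) = (t − x_{Aₙ,iₙ})⋯(t − x_{A₁,i₁})` associated to the ordering
`(σ 0, σ 1, …, σ (n-1))` of `{1,…,n}`, where `A_k = {σ 0, …, σ (k-1)}`. -/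
noncomputable def calPolyOrd (F : Type*) [Field F] (n : ℕ) (σ : Equiv.Perm (Fin n)) :
    Polynomial (Q F n) :=
  ((List.finRange n).reverse.map (fun k =>
    Polynomial.X - Polynomial.C
      (xgen F n ((Finset.Iio k).image σ) (σ k) (sigma_notmem σ k)))).prod

/-- The canonical polynomial `𝒫(t) ∈ Qₙ[t]` (defined via the standard ordering). -/
noncomputable def calPoly (F : Type*) [Field F] (n : ℕ) : Polynomial (Q F n) :=
  calPolyOrd F n 1

theorem Polynomial.X_sub_C_mul_X_sub_C {R : Type*} [Ring R] (u v : R) :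
    (X - C u) * (X - C v) = X ^ 2 - C (u + v) * X + C (u * v) := by
  simp only [C_add, C_mul, sq, sub_mul, mul_sub, X_mul_C]
  noncomm_ring

theorem List.prod_map_reverse_finRange_congr {M : Type*} [Monoid M] {N : ℕ} (i : Fin N)
    {f g : Fin (N + 1) → M} (hfg : ∀ k, k ≠ i.castSucc → k ≠ i.succ → f k = g k)
    (hmid : f i.succ * f i.castSucc = g i.succ * g i.castSucc) :
    ((finRange (N + 1)).reverse.map f).prod = ((finRange (N + 1)).reverse.map g).prod := by
  induction N with
  | zero => exact i.elim0
  | succ N ih =>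
    rw [finRange_succ]
    simp only [map_reverse, map_cons, reverse_cons, map_append, map_map, prod_append,
      prod_cons, map_nil, prod_nil, mul_one]
    induction i using Fin.cases with
    | zero =>
      have hrest : f ∘ Fin.succ ∘ Fin.succ = g ∘ Fin.succ ∘ Fin.succ := funext fun k =>
        hfg _ (Fin.succ_ne_zero _) (fun h => Fin.succ_ne_zero k (Fin.succ_injective _ h))
      simp only [Fin.castSucc_zero] at hmid
      simp only [finRange_succ, map_cons, reverse_cons, map_map, prod_append, prod_cons,
        prod_nil, mul_one, mul_assoc, Function.comp_assoc, Function.comp_apply, hrest, hmid]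
    | succ j =>
      have hzero : f 0 = g 0 :=
        hfg 0 (Fin.castSucc_ne_zero_iff.mpr j.succ_ne_zero).symm (Fin.succ_ne_zero _).symm
      have htail := ih j (f := f ∘ Fin.succ) (g := g ∘ Fin.succ)
        (fun k hk hk' => hfg k.succ
          (fun h => hk (Fin.succ_injective _ (h.trans (Fin.succ_castSucc j).symm)))
          (fun h => hk' (Fin.succ_injective _ h)))
        (by simpa only [Function.comp_apply, Fin.succ_castSucc] using hmid)
      rw [map_reverse, map_reverse] at htail
      rw [htail, hzero]

theorem Finset.image_mul_swap_of_mem_iff {α : Type*} [DecidableEq α] (σ : Equiv.Perm α)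
    {s : Finset α} {a b : α} (h : a ∈ s ↔ b ∈ s) :
    s.image ⇑(σ * Equiv.swap a b) = s.image σ := by
  rw [Equiv.Perm.coe_mul, ← Finset.image_image]
  congr 1
  ext x
  simp only [Finset.mem_image, Equiv.swap_apply_def]
  grind

theorem Fin.Iio_succ_eq_insert_castSucc {N : ℕ} (i : Fin N) :
    Finset.Iio i.succ = insert i.castSucc (Finset.Iio i.castSucc) := by
  ext k
  simp only [Finset.mem_Iio, Finset.mem_insert, Fin.lt_def, Fin.ext_iff, Fin.val_succ,
    Fin.val_castSucc]
  omega

theorem Fin.castSucc_lt_iff_succ_lt {N : ℕ} {i : Fin N} {k : Fin (N + 1)} (hk : k ≠ i.succ) :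
    i.castSucc < k ↔ i.succ < k := by
  rw [Fin.castSucc_lt_iff_succ_le, le_iff_lt_or_eq, or_iff_left hk.symm]

section PseudoRoots

variable (F : Type*) [Field F] (n : ℕ)

theorem xgen_congr {A A' : Finset (Fin n)} {i i' : Fin n} (hA : A = A') (hi : i = i')
    (h : i ∉ A) (h' : i' ∉ A') : xgen F n A i h = xgen F n A' i' h' := by
  subst hA hi
  rfl

variable {n}

theorem xgen_insert_add_xgen (A : Finset (Fin n)) (i j : Fin n) (hi : i ∉ A) (hj : j ∉ A)
    (hij : i ≠ j) :
    xgen F n (insert i A) j (notmem_insert hj (Ne.symm hij)) + xgen F n A i hi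
      = xgen F n (insert j A) i (notmem_insert hi hij) + xgen F n A j hj := by
  have h := RingQuot.mkAlgHom_rel F (QRel.add (F := F) A i j hi hj hij)
  rw [map_add, map_add] at h
  exact h

theorem xgen_insert_mul_xgen (A : Finset (Fin n)) (i j : Fin n) (hi : i ∉ A) (hj : j ∉ A)
    (hij : i ≠ j) :
    xgen F n (insert i A) j (notmem_insert hj (Ne.symm hij)) * xgen F n A i hi
      = xgen F n (insert j A) i (notmem_insert hi hij) * xgen F n A j hj := by
  have h := RingQuot.mkAlgHom_rel F (QRel.mul (F := F) A i j hi hj hij)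
  rw [map_mul, map_mul] at h
  exact h

theorem X_sub_C_xgen_insert_mul_X_sub_C_xgen (A : Finset (Fin n)) (i j : Fin n) (hi : i ∉ A)
    (hj : j ∉ A) (hij : i ≠ j) :
    (X - C (xgen F n (insert i A) j (notmem_insert hj (Ne.symm hij)))) * (X - C (xgen F n A i hi))
      = (X - C (xgen F n (insert j A) i (notmem_insert hi hij))) * (X - C (xgen F n A j hj)) := by
  rw [X_sub_C_mul_X_sub_C, X_sub_C_mul_X_sub_C, xgen_insert_add_xgen F A i j hi hj hij,
    xgen_insert_mul_xgen F A i j hi hj hij]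

end PseudoRoots

section OrderedFactor

variable (F : Type*) [Field F] {n : ℕ}

noncomputable def orderedFactor (σ : Equiv.Perm (Fin n)) (k : Fin n) : (Q F n)[X] :=
  X - C (xgen F n ((Finset.Iio k).image σ) (σ k) (sigma_notmem σ k))

theorem calPolyOrd_eq_prod_orderedFactor (σ : Equiv.Perm (Fin n)) :
    calPolyOrd F n σ = ((List.finRange n).reverse.map (orderedFactor F σ)).prod :=
  rfl

theorem orderedFactor_eq {σ : Equiv.Perm (Fin n)} {k : Fin n} {A : Finset (Fin n)} {i : Fin n}
    (hA : (Finset.Iio k).image σ = A) (hi : σ k = i) (h : i ∉ A) :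
    orderedFactor F σ k = X - C (xgen F n A i h) :=
  congrArg (fun x => X - C x) (xgen_congr F n hA hi _ h)

variable {N : ℕ} (σ : Equiv.Perm (Fin (N + 1))) (i : Fin N)

theorem orderedFactor_mul_swap_of_ne {k : Fin (N + 1)} (hk₁ : k ≠ i.castSucc)
    (hk₂ : k ≠ i.succ) :
    orderedFactor F (σ * Equiv.swap i.castSucc i.succ) k = orderedFactor F σ k := by
  refine orderedFactor_eq F (Finset.image_mul_swap_of_mem_iff σ ?_) ?_ _
  · simpa only [Finset.mem_Iio] using Fin.castSucc_lt_iff_succ_lt hk₂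
  · rw [Equiv.Perm.mul_apply, Equiv.swap_apply_of_ne_of_ne hk₁ hk₂]

theorem orderedFactor_mul_swap_succ_mul_castSucc :
    orderedFactor F (σ * Equiv.swap i.castSucc i.succ) i.succ
        * orderedFactor F (σ * Equiv.swap i.castSucc i.succ) i.castSucc
      = orderedFactor F σ i.succ * orderedFactor F σ i.castSucc := by
  set A := (Finset.Iio i.castSucc).image σ
  have hA : (Finset.Iio i.castSucc).image ⇑(σ * Equiv.swap i.castSucc i.succ) = A :=
    Finset.image_mul_swap_of_mem_iff σ
      (iff_of_false (by simp) (by simpa using (Fin.castSucc_lt_succ (i := i)).le))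
  have hIio : Finset.Iio i.succ = insert i.castSucc (Finset.Iio i.castSucc) :=
    Fin.Iio_succ_eq_insert_castSucc i
  have hi : σ i.castSucc ∉ A := sigma_notmem σ i.castSucc
  have hj : σ i.succ ∉ A := fun h => sigma_notmem σ i.succ
    (by rw [hIio, Finset.image_insert]; exact Finset.mem_insert_of_mem h)
  have hij : σ i.castSucc ≠ σ i.succ := σ.injective.ne (Fin.castSucc_lt_succ (i := i)).ne
  rw [orderedFactor_eq F (A := insert (σ i.succ) A) (i := σ i.castSucc)
      (by rw [hIio, Finset.image_insert, hA, Equiv.Perm.mul_apply, Equiv.swap_apply_left])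
      (by rw [Equiv.Perm.mul_apply, Equiv.swap_apply_right]) (notmem_insert hi hij),
    orderedFactor_eq F hA (by rw [Equiv.Perm.mul_apply, Equiv.swap_apply_left]) hj,
    orderedFactor_eq F (A := insert (σ i.castSucc) A) (i := σ i.succ)
      (by rw [hIio, Finset.image_insert]) rfl (notmem_insert hj hij.symm),
    orderedFactor_eq F rfl rfl hi]
  exact (X_sub_C_xgen_insert_mul_X_sub_C_xgen F A _ _ hi hj hij).symm

theorem calPolyOrd_mul_swap :
    calPolyOrd F (N + 1) (σ * Equiv.swap i.castSucc i.succ) = calPolyOrd F (N + 1) σ := by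
  rw [calPolyOrd_eq_prod_orderedFactor, calPolyOrd_eq_prod_orderedFactor]
  exact List.prod_map_reverse_finRange_congr i
    (fun _ hk₁ hk₂ => orderedFactor_mul_swap_of_ne F σ i hk₁ hk₂)
    (orderedFactor_mul_swap_succ_mul_castSucc F σ i)

end OrderedFactor

theorem stmt0 (F : Type*) [Field F] (n : ℕ) (σ τ : Equiv.Perm (Fin n)) :
    calPolyOrd F n σ = calPolyOrd F n τ := by
  suffices h : ∀ ρ : Equiv.Perm (Fin n), calPolyOrd F n ρ = calPolyOrd F n 1 by
    rw [h σ, h τ]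
  intro ρ
  cases n with
  | zero => rw [Subsingleton.elim ρ 1]
  | succ N =>
    induction ρ using Submonoid.induction_of_closure_eq_top_right
      (Equiv.Perm.mclosure_swap_castSucc_succ N) with
    | one => rfl
    | mul_right ρ _ hswap ih =>
      obtain ⟨i, rfl⟩ := hswap
      rw [calPolyOrd_mul_swap, ih]
end

section
/- If X = {x_1,…,x_n} is a generic set of right roots of a monic polynomial P(t) ∈ R[t] of degree n, then for each k = 1,…,n−1 and all distinct indices i_1,…,i_{k+1} ∈ {1,…,n}, the Vandermonde quasideterminant v(i_1,…,i_{k+1}) is defined (the required matrix inverse exists) and is an invertible element of R. -/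
open Polynomial

/-- The Vandermonde matrix `V(y₁,…,y_m)` with rows `(y₁^{m-1},…,y_m^{m-1}), …, (1,…,1)`. -/
def vmat {R : Type*} [Ring R] {m : ℕ} (y : Fin m → R) : Matrix (Fin m) (Fin m) R :=
  Matrix.of fun a b => y b ^ (m - 1 - (a : ℕ))

/-- The Vandermonde quasideterminant
`v(y₁,…,y_{k+1}) = y_{k+1}^k − r · V(y₁,…,y_k)⁻¹ · c`, where `r` is the row
`(y₁^k,…,y_k^k)` and `c` is the column `(y_{k+1}^{k-1},…,y_{k+1},1)ᵀ`. -/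
noncomputable def quasidet {R : Type*} [Ring R] {k : ℕ} (y : Fin (k + 1) → R) : R :=
  y (Fin.last k) ^ k -
    (Matrix.of (fun (_ : Fin 1) (b : Fin k) => y b.castSucc ^ k) *
      Ring.inverse (vmat (fun b : Fin k => y b.castSucc)) *
      Matrix.of (fun (a : Fin k) (_ : Fin 1) => y (Fin.last k) ^ (k - 1 - (a : ℕ)))) 0 0

/-- `a` is a right root of `P(t) = a₀tⁿ + ⋯ + aₙ` if `a₀aⁿ + a₁aⁿ⁻¹ + ⋯ + aₙ = 0`. -/
def IsRightRoot {R : Type*} [Ring R] (P : Polynomial R) (a : R) : Prop :=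
  P.eval₂ (RingHom.id R) a = 0

/-- A family `x₁,…,xₙ` is generic if every Vandermonde matrix built from `k+1 ≤ n`
of them (with distinct indices) is invertible. -/
def Generic {R : Type*} [Ring R] {n : ℕ} (x : Fin n → R) : Prop :=
  ∀ k : ℕ, k + 1 ≤ n → ∀ i : Fin (k + 1) → Fin n, Function.Injective i →
    IsUnit (vmat (x ∘ i))

section Aux

variable {R : Type*} [Ring R]

lemma toBlocks₂₂_one {m n : Type*} [DecidableEq m] [DecidableEq n] :
    (1 : Matrix (m ⊕ n) (m ⊕ n) R).toBlocks₂₂ = 1 := by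
  ext a b
  simp [Matrix.toBlocks₂₂, Matrix.one_apply, Sum.inr.injEq]

/-- A submatrix along an equivalence preserves invertibility. -/
lemma isUnit_submatrix_equiv {m n : Type*} [Fintype m] [Fintype n] [DecidableEq m] [DecidableEq n]
    {M : Matrix n n R} (e : m ≃ n) (h : IsUnit M) : IsUnit (M.submatrix e e) := by
  obtain ⟨u, rfl⟩ := h
  refine isUnit_iff_exists.mpr ⟨u.inv.submatrix e e, ?_, ?_⟩
  · rw [Matrix.submatrix_mul_equiv, u.val_inv, Matrix.submatrix_one_equiv]
  · rw [Matrix.submatrix_mul_equiv, u.inv_val, Matrix.submatrix_one_equiv]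

lemma isUnit_submatrix_equiv₂ {m n : Type*} [Fintype m] [Fintype n] [DecidableEq m] [DecidableEq n]
    {M : Matrix n n R} (e f : m ≃ n) (h : IsUnit M) : IsUnit (M.submatrix e f) := by
  have key : M.submatrix e f = M.submatrix e e * (1 : Matrix n n R).submatrix e f := by
    rw [Matrix.submatrix_mul_equiv, Matrix.mul_one]
  rw [key]
  refine (isUnit_submatrix_equiv e h).mul (isUnit_iff_exists.mpr
    ⟨(1 : Matrix n n R).submatrix f e, ?_, ?_⟩) <;>
      rw [Matrix.submatrix_mul_equiv, Matrix.one_mul, Matrix.submatrix_one_equiv]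

set_option maxHeartbeats 3000000 in
/-- If a 2×2 block matrix with invertible top-left block is invertible, so is its
Schur complement (noncommutative version). -/
lemma isUnit_schur {m n : Type*} [Fintype m] [Fintype n] [DecidableEq m] [DecidableEq n]
    {A : Matrix m m R} {B : Matrix m n R} {C : Matrix n m R} {D : Matrix n n R}
    [Invertible A] (hM : IsUnit (Matrix.fromBlocks A B C D)) :
    IsUnit (D - C * ⅟A * B) := by
  have hL1 : Matrix.fromBlocks (1 : Matrix m m R) (0 : Matrix m n R) (C * ⅟A) 1 *
      Matrix.fromBlocks (1 : Matrix m m R) (0 : Matrix m n R) (-(C * ⅟A)) 1 = 1 := by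
    rw [Matrix.fromBlocks_multiply]; simp [Matrix.fromBlocks_one]
  have hL2 : Matrix.fromBlocks (1 : Matrix m m R) (0 : Matrix m n R) (-(C * ⅟A)) 1 *
      Matrix.fromBlocks (1 : Matrix m m R) (0 : Matrix m n R) (C * ⅟A) 1 = 1 := by
    rw [Matrix.fromBlocks_multiply]; simp [Matrix.fromBlocks_one]
  have hU1 : Matrix.fromBlocks (1 : Matrix m m R) (⅟A * B) (0 : Matrix n m R) 1 *
      Matrix.fromBlocks (1 : Matrix m m R) (-(⅟A * B)) (0 : Matrix n m R) 1 = 1 := by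
    rw [Matrix.fromBlocks_multiply]; simp [Matrix.fromBlocks_one]
  have hU2 : Matrix.fromBlocks (1 : Matrix m m R) (-(⅟A * B)) (0 : Matrix n m R) 1 *
      Matrix.fromBlocks (1 : Matrix m m R) (⅟A * B) (0 : Matrix n m R) 1 = 1 := by
    rw [Matrix.fromBlocks_multiply]; simp [Matrix.fromBlocks_one]
  have hdecomp : Matrix.fromBlocks A B C D =
      Matrix.fromBlocks (1 : Matrix m m R) (0 : Matrix m n R) (C * ⅟A) 1 *
        Matrix.fromBlocks A (0 : Matrix m n R) (0 : Matrix n m R) (D - C * ⅟A * B) *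
        Matrix.fromBlocks (1 : Matrix m m R) (⅟A * B) (0 : Matrix n m R) 1 := by
    simp only [Matrix.fromBlocks_multiply, Matrix.mul_zero, Matrix.zero_mul, add_zero, zero_add,
      Matrix.one_mul, Matrix.mul_one, invOf_mul_self, Matrix.mul_invOf_cancel_left,
      Matrix.invOf_mul_cancel_right, Matrix.mul_assoc, add_sub_cancel]
  obtain ⟨W, hW1, hW2⟩ := isUnit_iff_exists.mp hM
  haveI : Invertible (Matrix.fromBlocks (1 : Matrix m m R) (0 : Matrix m n R) (C * ⅟A) 1 *
      Matrix.fromBlocks A (0 : Matrix m n R) (0 : Matrix n m R) (D - C * ⅟A * B) *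
      Matrix.fromBlocks (1 : Matrix m m R) (⅟A * B) (0 : Matrix n m R) 1) :=
    ⟨W, by rw [← hdecomp]; exact hW2, by rw [← hdecomp]; exact hW1⟩
  haveI : Invertible (Matrix.fromBlocks (1 : Matrix m m R) (⅟A * B) (0 : Matrix n m R) 1) :=
    ⟨Matrix.fromBlocks (1 : Matrix m m R) (-(⅟A * B)) (0 : Matrix n m R) 1, hU2, hU1⟩
  haveI : Invertible (Matrix.fromBlocks (1 : Matrix m m R) (0 : Matrix m n R) (C * ⅟A) 1) :=
    ⟨Matrix.fromBlocks (1 : Matrix m m R) (0 : Matrix m n R) (-(C * ⅟A)) 1, hL2, hL1⟩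
  haveI : Invertible (Matrix.fromBlocks (1 : Matrix m m R) (0 : Matrix m n R) (C * ⅟A) 1 *
      Matrix.fromBlocks A (0 : Matrix m n R) (0 : Matrix n m R) (D - C * ⅟A * B)) :=
    invertibleOfMulInvertible
      (Matrix.fromBlocks (1 : Matrix m m R) (0 : Matrix m n R) (C * ⅟A) 1 *
        Matrix.fromBlocks A (0 : Matrix m n R) (0 : Matrix n m R) (D - C * ⅟A * B))
      (Matrix.fromBlocks (1 : Matrix m m R) (⅟A * B) (0 : Matrix n m R) 1)
  haveI hMidInv : Invertible
      (Matrix.fromBlocks A (0 : Matrix m n R) (0 : Matrix n m R) (D - C * ⅟A * B)) :=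
    invertibleOfInvertibleMul
      (Matrix.fromBlocks (1 : Matrix m m R) (0 : Matrix m n R) (C * ⅟A) 1) _
  obtain ⟨W2, g1, g2⟩ := isUnit_iff_exists.mp (isUnit_of_invertible
    (Matrix.fromBlocks A (0 : Matrix m n R) (0 : Matrix n m R) (D - C * ⅟A * B)))
  rw [← Matrix.fromBlocks_toBlocks W2, Matrix.fromBlocks_multiply] at g1 g2
  have e1 := congrArg Matrix.toBlocks₂₂ g1
  have e2 := congrArg Matrix.toBlocks₂₂ g2
  rw [Matrix.toBlocks_fromBlocks₂₂, toBlocks₂₂_one] at e1 e2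
  refine isUnit_iff_exists.mpr ⟨W2.toBlocks₂₂, ?_, ?_⟩
  · simpa using e1
  · simpa using e2

lemma isUnit_entry_of_isUnit {S : Matrix (Fin 1) (Fin 1) R} (h : IsUnit S) : IsUnit (S 0 0) := by
  obtain ⟨W, h1, h2⟩ := isUnit_iff_exists.mp h
  refine isUnit_iff_exists.mpr ⟨W 0 0, ?_, ?_⟩
  · have h3 : (S * W) 0 0 = (1 : Matrix (Fin 1) (Fin 1) R) 0 0 := by rw [h1]
    simpa [Matrix.mul_apply, Fin.sum_univ_one, Matrix.one_apply] using h3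
  · have h3 : (W * S) 0 0 = (1 : Matrix (Fin 1) (Fin 1) R) 0 0 := by rw [h2]
    simpa [Matrix.mul_apply, Fin.sum_univ_one, Matrix.one_apply] using h3

/-- Row reindexing: `0 ↦` last block, `j+1 ↦` first block. -/
def rowEquiv (k : ℕ) : Fin k ⊕ Fin 1 ≃ Fin (k + 1) where
  toFun := Sum.elim Fin.succ (fun _ => 0)
  invFun := Fin.cases (Sum.inr 0) Sum.inl
  left_inv := by
    rintro (j | j)
    · simp
    · simp [Fin.eq_zero j]
  right_inv := by
    intro a
    induction a using Fin.cases <;> simp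

/-- Column reindexing: `castSucc` on the first block, `last` on the second. -/
def colEquiv (k : ℕ) : Fin k ⊕ Fin 1 ≃ Fin (k + 1) where
  toFun := Sum.elim Fin.castSucc (fun _ => Fin.last k)
  invFun := Fin.lastCases (Sum.inr 0) Sum.inl
  left_inv := by
    rintro (j | j)
    · simp
    · simp [Fin.eq_zero j]
  right_inv := by
    intro a
    induction a using Fin.lastCases <;> simp

end Aux

theorem stmt2 {R : Type*} [Ring R] (n : ℕ) (P : Polynomial R)
    (hP : P.Monic) (hdeg : P.natDegree = n) (x : Fin n → R)
    (hroots : ∀ j, IsRightRoot P (x j)) (hgen : Generic x) :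
    ∀ k : ℕ, 1 ≤ k → k + 1 ≤ n → ∀ i : Fin (k + 1) → Fin n, Function.Injective i →
      IsUnit (vmat (fun b : Fin k => x (i b.castSucc))) ∧ IsUnit (quasidet (x ∘ i)) := by
  intro k hk1 hkn i hi
  -- the small Vandermonde matrix is invertible by genericity
  have hA : IsUnit (vmat (fun b : Fin k => x (i b.castSucc))) := by
    obtain ⟨m, rfl⟩ : ∃ m, k = m + 1 := ⟨k - 1, by omega⟩
    have := hgen m (by omega) (fun b => i b.castSucc)
      (fun a b hab => Fin.castSucc_injective _ (hi hab))
    exact this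
  refine ⟨hA, ?_⟩
  -- the big Vandermonde matrix is invertible by genericity
  have hM : IsUnit (vmat (x ∘ i)) := hgen k hkn i hi
  -- reindex the big matrix into block form
  set A : Matrix (Fin k) (Fin k) R := vmat (fun b : Fin k => x (i b.castSucc)) with hAdef
  set B : Matrix (Fin k) (Fin 1) R :=
    Matrix.of (fun (a : Fin k) (_ : Fin 1) => x (i (Fin.last k)) ^ (k - 1 - (a : ℕ))) with hBdef
  set C : Matrix (Fin 1) (Fin k) R :=
    Matrix.of (fun (_ : Fin 1) (b : Fin k) => x (i b.castSucc) ^ k) with hCdef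
  set D : Matrix (Fin 1) (Fin 1) R :=
    Matrix.of (fun (_ : Fin 1) (_ : Fin 1) => x (i (Fin.last k)) ^ k) with hDdef
  have hblock : (vmat (x ∘ i)).submatrix (rowEquiv k) (colEquiv k) =
      Matrix.fromBlocks A B C D := by
    ext a b
    rcases a with a | a <;> rcases b with b | b <;>
      simp [vmat, rowEquiv, colEquiv, Matrix.submatrix_apply, hAdef, hBdef, hCdef, hDdef,
        Function.comp] <;>
      · congr 1
        omega
  have hN : IsUnit (Matrix.fromBlocks A B C D) := by
    rw [← hblock]
    exact isUnit_submatrix_equiv₂ _ _ hM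
  haveI : Invertible A := hA.invertible
  have hS := isUnit_schur hN
  have hq : quasidet (x ∘ i) = (D - C * Ring.inverse A * B) 0 0 := by
    simp [quasidet, hAdef, hBdef, hCdef, hDdef, Matrix.sub_apply, Function.comp]
  rw [hq, Ring.inverse_invertible]
  exact isUnit_entry_of_isUnit hS
end

section
/- Let R be a unital associative ring, P(t) ∈ R[t] monic of degree n, and X = {x_1,…,x_n} a generic set of right roots of P(t). For any ordering (i_1,…,i_n) of {1,…,n}, set y_1 = x_{i_1} and y_k = v(i_1,…,i_k)·x_{i_k}·v(i_1,…,i_k)^{-1} for k = 2,…,n. Then P(t) = (t − y_n)(t − y_{n-1})⋯(t − y_1) in R[t]. -/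
open Polynomial

open Polynomial

section Aux
variable {R : Type*} [Ring R]

-- right evaluation of (X - C y) * g
lemma eval_XC_mul (y a : R) (g : R[X]) :
    ((X - C y) * g).eval₂ (RingHom.id R) a
      = g.eval₂ (RingHom.id R) a * a - y * g.eval₂ (RingHom.id R) a := by
  have h : (X - C y) * g = g * X - y • g := by
    rw [sub_mul, Polynomial.X_mul, ← Polynomial.C_mul' y g]
  rw [h, eval₂_sub, eval₂_mul_X, eval₂_smul]
  simp

-- evaluation via coefficient sum for monic of natDegree m
lemma eval_monic_sum {m : ℕ} {g : R[X]} (hm : g.Monic) (hdeg : g.natDegree = m) (t : R) :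
    g.eval₂ (RingHom.id R) t
      = t ^ m + ∑ a : Fin m, g.coeff (m - 1 - (a : ℕ)) * t ^ (m - 1 - (a : ℕ)) := by
  rw [Polynomial.eval₂_eq_sum_range' (RingHom.id R) (by omega : g.natDegree < m + 1) t,
    Finset.sum_range_succ]
  have hlead : g.coeff m = 1 := by
    have := hm.coeff_natDegree
    rwa [hdeg] at this
  rw [hlead]
  simp only [RingHom.id_apply, one_mul]
  rw [add_comm]
  congr 1
  rw [← Finset.sum_range_reflect (fun j => g.coeff j * t ^ j) m]
  exact (Finset.sum_range fun j => g.coeff (m - 1 - j) * t ^ (m - 1 - j))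

lemma quasidet_eval {m : ℕ} (χ : Fin (m + 1) → R)
    (hW : IsUnit (vmat fun b : Fin m => χ b.castSucc))
    (g : R[X]) (hm : g.Monic) (hdeg : g.natDegree = m)
    (hz : ∀ b : Fin m, g.eval₂ (RingHom.id R) (χ b.castSucc) = 0) :
    g.eval₂ (RingHom.id R) (χ (Fin.last m)) = quasidet χ := by
  set W : Matrix (Fin m) (Fin m) R := vmat fun b : Fin m => χ b.castSucc with hWdef
  set rM : Matrix (Fin 1) (Fin m) R := Matrix.of (fun (_ : Fin 1) (b : Fin m) => χ b.castSucc ^ m) with hrM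
  set cM : Matrix (Fin m) (Fin 1) R :=
    Matrix.of (fun (a : Fin m) (_ : Fin 1) => χ (Fin.last m) ^ (m - 1 - (a : ℕ))) with hcM
  set e : Matrix (Fin 1) (Fin m) R := Matrix.of (fun _ a => g.coeff (m - 1 - (a : ℕ))) with he
  have hEW : e * W = -rM := by
    ext i b
    have h0 := hz b
    rw [eval_monic_sum hm hdeg] at h0
    have h1 : (e * W) i b = ∑ a : Fin m, g.coeff (m - 1 - (a : ℕ)) * χ b.castSucc ^ (m - 1 - (a : ℕ)) := by
      simp [Matrix.mul_apply, he, hWdef, vmat]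
    rw [h1]
    have : rM i b = χ b.castSucc ^ m := rfl
    rw [Matrix.neg_apply, this]
    exact eq_neg_of_add_eq_zero_right h0
  have hE : e = -(rM * Ring.inverse W) := by
    calc e = e * (W * Ring.inverse W) := by rw [Ring.mul_inverse_cancel _ hW, Matrix.mul_one]
    _ = (e * W) * Ring.inverse W := by rw [Matrix.mul_assoc]
    _ = -(rM * Ring.inverse W) := by rw [hEW, Matrix.neg_mul]
  rw [eval_monic_sum hm hdeg]
  have h2 : ∑ a : Fin m, g.coeff (m - 1 - (a : ℕ)) * χ (Fin.last m) ^ (m - 1 - (a : ℕ))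
      = (e * cM) 0 0 := by
    simp [Matrix.mul_apply, he, hcM]
  rw [h2, hE]
  have h3 : (-(rM * Ring.inverse W) * cM) 0 0 = -((rM * Ring.inverse W * cM) 0 0) := by
    rw [Matrix.neg_mul, Matrix.neg_apply]
  rw [h3, quasidet]
  rw [← sub_eq_add_neg]

lemma quasidet_isUnit {m : ℕ} (χ : Fin (m + 1) → R)
    (hW : IsUnit (vmat fun b : Fin m => χ b.castSucc))
    (hV : IsUnit (vmat χ)) : IsUnit (quasidet χ) := by
  set W : Matrix (Fin m) (Fin m) R := vmat fun b : Fin m => χ b.castSucc with hWdef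
  set rM : Matrix (Fin 1) (Fin m) R := Matrix.of (fun (_ : Fin 1) (b : Fin m) => χ b.castSucc ^ m) with hrM
  set cM : Matrix (Fin m) (Fin 1) R :=
    Matrix.of (fun (a : Fin m) (_ : Fin 1) => χ (Fin.last m) ^ (m - 1 - (a : ℕ))) with hcM
  set V : Matrix (Fin (m + 1)) (Fin (m + 1)) R := vmat χ with hVdef
  set K : Matrix (Fin (m + 1)) (Fin (m + 1)) R := Ring.inverse V with hK
  have hVK : V * K = 1 := Ring.mul_inverse_cancel _ hV
  have hKV : K * V = 1 := Ring.inverse_mul_cancel _ hV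
  set Wi : Matrix (Fin m) (Fin m) R := Ring.inverse W with hWi
  set v : R := quasidet χ with hv
  have hVentry : ∀ (a b : Fin (m + 1)), V a b = χ b ^ (m - (a : ℕ)) := fun a b => rfl
  -- the coefficient row t : leading 1 then -(rM * Wi)
  set t : Matrix (Fin 1) (Fin (m + 1)) R :=
    Matrix.of (fun (_ : Fin 1) (j : Fin (m + 1)) =>
      Fin.cases (motive := fun _ => R) 1 (fun a => (-(rM * Wi)) 0 a) j) with ht
  have hTV : ∀ b, (t * V) 0 b = if b = Fin.last m then v else 0 := by
    intro b
    rw [Matrix.mul_apply, Fin.sum_univ_succ]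
    have ht0 : t 0 0 = 1 := rfl
    have hts : ∀ a : Fin m, t 0 a.succ = (-(rM * Wi)) 0 a := fun a => rfl
    rw [ht0, one_mul]
    simp only [hts]
    cases b using Fin.lastCases with
    | last =>
      have h1 : V 0 (Fin.last m) = χ (Fin.last m) ^ m := by
        rw [hVentry]; norm_num
      have h2 : ∀ a : Fin m, V a.succ (Fin.last m) = cM a 0 := by
        intro a
        rw [hVentry, hcM]
        simp [Fin.val_succ]
        congr 1
        omega
      rw [if_pos rfl, h1]
      have h3 : ∑ a : Fin m, (-(rM * Wi)) 0 a * V a.succ (Fin.last m)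
          = ((-(rM * Wi)) * cM) 0 0 := by
        rw [Matrix.mul_apply]
        exact Finset.sum_congr rfl fun a _ => by rw [h2]
      rw [h3, Matrix.neg_mul, Matrix.neg_apply, hv, quasidet, Matrix.mul_assoc,
        sub_eq_add_neg]
    | cast b' =>
      have h1 : V 0 b'.castSucc = rM 0 b' := by
        rw [hVentry]; norm_num; rfl
      have h2 : ∀ a : Fin m, V a.succ b'.castSucc = W a b' := by
        intro a
        rw [hVentry, hWdef]
        show χ b'.castSucc ^ (m - ((a : ℕ) + 1)) = χ b'.castSucc ^ (m - 1 - (a : ℕ))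
        congr 1
        omega
      have h3 : ∑ a : Fin m, (-(rM * Wi)) 0 a * V a.succ b'.castSucc
          = ((-(rM * Wi)) * W) 0 b' := by
        rw [Matrix.mul_apply]
        exact Finset.sum_congr rfl fun a _ => by rw [h2]
      rw [if_neg (by simp [Fin.ext_iff]; omega), h1, h3, Matrix.neg_mul, Matrix.mul_assoc,
        Ring.inverse_mul_cancel _ hW, Matrix.mul_one, Matrix.neg_apply]
      exact add_neg_cancel _
  -- right inverse : v * K (last) 0 = 1
  have hright : v * K (Fin.last m) 0 = 1 := by
    have h4 : t 0 0 = ((t * V) * K) 0 0 := by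
      rw [Matrix.mul_assoc, hVK, Matrix.mul_one]
    have h5 : ((t * V) * K) 0 0 = ∑ b, (t * V) 0 b * K b 0 := Matrix.mul_apply
    rw [h5] at h4
    have h6 : ∀ b, (t * V) 0 b * K b 0 = if b = Fin.last m then v * K b 0 else 0 := by
      intro b
      rw [hTV b]
      split <;> simp
    rw [Finset.sum_congr rfl fun b _ => h6 b, Finset.sum_ite_eq' Finset.univ (Fin.last m)
      (fun b => v * K b 0)] at h4
    simp at h4
    exact h4.symm
  -- left inverse : K (last) 0 * v = 1
  set c0 : R := K (Fin.last m) 0 with hc0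
  set s' : Matrix (Fin 1) (Fin m) R := Matrix.of (fun (_ : Fin 1) (a : Fin m) => K (Fin.last m) a.succ) with hs'
  have hKVe : ∀ b, ∑ j, K (Fin.last m) j * V j b = if Fin.last m = b then 1 else 0 := by
    intro b
    have := congrFun (congrFun hKV (Fin.last m)) b
    rw [Matrix.mul_apply] at this
    rw [this]
    rfl
  have hs'W : s' * W = (-c0) • rM := by
    ext i b'
    have h := hKVe b'.castSucc
    rw [Fin.sum_univ_succ] at h
    rw [if_neg (by simp [Fin.ext_iff]; omega)] at h
    have h2 : ∀ a : Fin m, V a.succ b'.castSucc = W a b' := by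
      intro a
      show χ b'.castSucc ^ (m - ((a : ℕ) + 1)) = χ b'.castSucc ^ (m - 1 - (a : ℕ))
      congr 1
      omega
    have h1 : V 0 b'.castSucc = rM 0 b' := by rw [hVentry]; norm_num; rfl
    rw [h1] at h
    have h3 : ∑ a : Fin m, K (Fin.last m) a.succ * V a.succ b'.castSucc = (s' * W) 0 b' := by
      rw [Matrix.mul_apply]
      exact Finset.sum_congr rfl fun a _ => by rw [h2]; rfl
    rw [h3] at h
    have hi : i = 0 := Subsingleton.elim _ _
    rw [hi, Matrix.smul_apply, smul_eq_mul, neg_mul]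
    exact eq_neg_of_add_eq_zero_right h
  have hs'2 : s' = (-c0) • (rM * Wi) := by
    calc s' = s' * (W * Wi) := by rw [Ring.mul_inverse_cancel _ hW, Matrix.mul_one]
    _ = (s' * W) * Wi := by rw [Matrix.mul_assoc]
    _ = (-c0) • (rM * Wi) := by rw [hs'W, Matrix.smul_mul]
  have hleft : c0 * v = 1 := by
    have h := hKVe (Fin.last m)
    rw [Fin.sum_univ_succ, if_pos rfl] at h
    have h1 : V 0 (Fin.last m) = χ (Fin.last m) ^ m := by rw [hVentry]; norm_num
    have h2 : ∀ a : Fin m, V a.succ (Fin.last m) = cM a 0 := by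
      intro a
      show χ (Fin.last m) ^ (m - ((a : ℕ) + 1)) = χ (Fin.last m) ^ (m - 1 - (a : ℕ))
      congr 1
      omega
    have h3 : ∑ a : Fin m, K (Fin.last m) a.succ * V a.succ (Fin.last m) = (s' * cM) 0 0 := by
      rw [Matrix.mul_apply]
      exact Finset.sum_congr rfl fun a _ => by rw [h2]; rfl
    rw [h1, h3, hs'2, Matrix.smul_mul, Matrix.smul_apply, smul_eq_mul, neg_mul] at h
    have hq : v = χ (Fin.last m) ^ m - (rM * Wi * cM) 0 0 := rfl
    rw [hq, mul_sub, sub_eq_add_neg]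
    exact h
  exact ⟨⟨v, c0, hright, hleft⟩, rfl⟩


lemma quasidet_eq_one {m : ℕ} (hm : m = 0) (χ : Fin (m + 1) → R) : quasidet χ = 1 := by
  subst hm
  simp [quasidet, Matrix.mul_apply]

lemma hW_aux {n k : ℕ} (x : Fin n → R) (hgen : Generic x) (σ : Equiv.Perm (Fin n))
    (hk : k < n) :
    IsUnit (vmat fun b : Fin k => x (σ (Fin.castLE hk b.castSucc))) := by
  cases k with
  | zero => exact isUnit_of_subsingleton _
  | succ m =>
    have hmn : m + 1 ≤ n := by omega
    have h := hgen m hmn (fun j => σ (Fin.castLE hmn j))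
      (fun a b hab => by
        have := σ.injective hab
        exact Fin.castLE_injective hmn this)
    exact h

lemma eq_of_monic_of_vanish {m : ℕ} (pts : Fin (m + 1) → R) (hV : IsUnit (vmat pts))
    (p q : R[X]) (hp : p.Monic) (hq : q.Monic)
    (hpd : p.natDegree = m + 1) (hqd : q.natDegree = m + 1)
    (h : ∀ b, p.eval₂ (RingHom.id R) (pts b) = q.eval₂ (RingHom.id R) (pts b)) : p = q := by
  set V : Matrix (Fin (m + 1)) (Fin (m + 1)) R := vmat pts with hVdef
  set h' : R[X] := p - q with hh'
  have htop : h'.coeff (m + 1) = 0 := by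
    rw [hh', Polynomial.coeff_sub]
    have h1 : p.coeff (m + 1) = 1 := by have := hp.coeff_natDegree; rwa [hpd] at this
    have h2 : q.coeff (m + 1) = 1 := by have := hq.coeff_natDegree; rwa [hqd] at this
    rw [h1, h2, sub_self]
  have hdle : h'.natDegree ≤ m + 1 := by
    rw [hh']
    exact le_trans (Polynomial.natDegree_sub_le p q) (by rw [hpd, hqd]; simp)
  have hvan : ∀ b, h'.eval₂ (RingHom.id R) (pts b) = 0 := by
    intro b
    rw [hh', Polynomial.eval₂_sub, h b, sub_self]
  set e : Matrix (Fin 1) (Fin (m + 1)) R := Matrix.of (fun _ a => h'.coeff (m - (a : ℕ))) with he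
  have hEV : e * V = 0 := by
    ext i b
    have h0 := hvan b
    rw [Polynomial.eval₂_eq_sum_range' (RingHom.id R) (by omega : h'.natDegree < m + 2) (pts b),
      Finset.sum_range_succ] at h0
    rw [htop] at h0
    simp only [RingHom.id_apply, zero_mul, add_zero, map_zero] at h0
    rw [← Finset.sum_range_reflect (fun j => h'.coeff j * pts b ^ j) (m + 1)] at h0
    rw [Finset.sum_range] at h0
    have h1 : (e * V) i b = ∑ a : Fin (m + 1), h'.coeff (m - (a : ℕ)) * pts b ^ (m - (a : ℕ)) := by
      rw [Matrix.mul_apply]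
      apply Finset.sum_congr rfl
      intro a _
      show h'.coeff (m - (a : ℕ)) * pts b ^ (m + 1 - 1 - (a : ℕ)) = _
      norm_num
    rw [h1, Matrix.zero_apply]
    rw [← h0]
    apply Finset.sum_congr rfl
    intro a _
    congr 2 <;> omega
  have hE : e = 0 := by
    calc e = e * (V * Ring.inverse V) := by rw [Ring.mul_inverse_cancel _ hV, Matrix.mul_one]
    _ = (e * V) * Ring.inverse V := by rw [Matrix.mul_assoc]
    _ = 0 := by rw [hEV, Matrix.zero_mul]
  have hco : ∀ j, h'.coeff j = 0 := by
    intro j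
    rcases lt_trichotomy j (m + 1) with hj | hj | hj
    · have h2 : e 0 ⟨m - j, by omega⟩ = 0 := by rw [hE]; rfl
      have h3 : h'.coeff (m - (m - j)) = 0 := h2
      rwa [Nat.sub_sub_self (by omega : j ≤ m)] at h3
    · rw [hj]; exact htop
    · exact Polynomial.coeff_eq_zero_of_natDegree_lt (by omega)
  have : h' = 0 := Polynomial.ext fun j => by rw [hco j]; simp
  have := sub_eq_zero.mp (hh' ▸ this)
  exact this

end Aux

/-- If `X = {x₁,…,xₙ}` is a generic set of right roots of a monic `P(t) ∈ R[t]` of degree `n`,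
then for any ordering `(i₁,…,iₙ)` of `{1,…,n}`, setting `y₁ = x_{i₁}` and
`y_k = v(i₁,…,i_k)·x_{i_k}·v(i₁,…,i_k)⁻¹` for `k ≥ 2`, we have
`P(t) = (t − yₙ)(t − y_{n-1})⋯(t − y₁)`. -/
theorem stmt4 {R : Type*} [Ring R] (n : ℕ) (P : Polynomial R)
    (hP : P.Monic) (hdeg : P.natDegree = n) (x : Fin n → R)
    (hroots : ∀ j, IsRightRoot P (x j)) (hgen : Generic x)
    (σ : Equiv.Perm (Fin n)) (y : Fin n → R)
    (hy : ∀ k : Fin n,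
      y k = if (k : ℕ) = 0 then x (σ k)
        else
          (quasidet (fun j : Fin ((k : ℕ) + 1) => x (σ (Fin.castLE k.isLt j)))) * x (σ k) *
            Ring.inverse (quasidet (fun j : Fin ((k : ℕ) + 1) => x (σ (Fin.castLE k.isLt j))))) :
    P = ((List.finRange n).reverse.map (fun k => Polynomial.X - Polynomial.C (y k))).prod := by
  classical
  rcases subsingleton_or_nontrivial R with hs | hnt
  · haveI : Subsingleton R[X] := ⟨fun p q => Polynomial.ext fun i => Subsingleton.elim _ _⟩
    exact Subsingleton.elim _ _
  set y' : ℕ → R := fun j => if h : j < n then y ⟨j, h⟩ else 0 with hy'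
  set G : ℕ → R[X] := fun k => (((List.range k).reverse).map (fun j => X - C (y' j))).prod with hG
  have hG0 : G 0 = 1 := by simp [hG]
  have hGsucc : ∀ k, G (k + 1) = (X - C (y' k)) * G k := by
    intro k
    simp [hG, List.range_succ]
  have hGmonic : ∀ k, (G k).Monic ∧ (G k).natDegree = k := by
    intro k
    induction k with
    | zero => rw [hG0]; exact ⟨monic_one, natDegree_one⟩
    | succ k ih =>
      rw [hGsucc k]
      refine ⟨(monic_X_sub_C _).mul ih.1, ?_⟩
      rw [Monic.natDegree_mul (monic_X_sub_C _) ih.1, natDegree_X_sub_C, ih.2]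
      omega
  have main : ∀ k, k ≤ n → ∀ j : Fin n, (j : ℕ) < k →
      (G k).eval₂ (RingHom.id R) (x (σ j)) = 0 := by
    intro k
    induction k with
    | zero => intro _ j hj; omega
    | succ k ih =>
      intro hk1 j hj
      have hk : k < n := hk1
      set χ : Fin (k + 1) → R := fun i => x (σ (Fin.castLE hk i)) with hχ
      have hWu : IsUnit (vmat fun b : Fin k => χ b.castSucc) := hW_aux x hgen σ hk
      have hVu : IsUnit (vmat χ) :=
        hgen k hk (fun i => σ (Fin.castLE hk i))
          (fun a b hab => Fin.castLE_injective hk (σ.injective hab))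
      have hGm := hGmonic k
      have hzero : ∀ b : Fin k, (G k).eval₂ (RingHom.id R) (χ b.castSucc) = 0 := by
        intro b
        exact ih (le_of_lt hk) (Fin.castLE hk b.castSucc) b.isLt
      have huq : (G k).eval₂ (RingHom.id R) (χ (Fin.last k)) = quasidet χ :=
        quasidet_eval χ hWu (G k) hGm.1 hGm.2 hzero
      have huu : IsUnit (quasidet χ) := quasidet_isUnit χ hWu hVu
      have hκχ : x (σ (⟨k, hk⟩ : Fin n)) = χ (Fin.last k) := rfl
      have hyk : y ⟨k, hk⟩ = quasidet χ * x (σ ⟨k, hk⟩) * Ring.inverse (quasidet χ) := by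
        rw [hy ⟨k, hk⟩]
        by_cases h0 : ((⟨k, hk⟩ : Fin n) : ℕ) = 0
        · rw [if_pos h0, quasidet_eq_one h0 χ]
          simp
        · rw [if_neg h0]
      have hy'k : y' k = y ⟨k, hk⟩ := by simp only [hy']; rw [dif_pos hk]
      rw [hGsucc k, eval_XC_mul]
      rcases lt_or_eq_of_le (Nat.lt_succ_iff.mp hj) with hjk | hjk
      · rw [ih (le_of_lt hk) j hjk]
        simp
      · have hjκ : j = ⟨k, hk⟩ := Fin.ext hjk
        rw [hjκ, hy'k, hyk, hκχ, huq]
        have h5 : quasidet χ * χ (Fin.last k) * Ring.inverse (quasidet χ) * quasidet χ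
            = quasidet χ * χ (Fin.last k) := by
          rw [mul_assoc, Ring.inverse_mul_cancel _ huu, mul_one]
        rw [h5, sub_self]
  have hlist : ((List.finRange n).reverse.map (fun k => X - C (y k))).prod = G n := by
    rw [hG]
    congr 1
    have h1 : List.range n = (List.finRange n).map (Fin.val) := by
      exact List.ext_getElem (by simp) (by simp)
    rw [h1, List.map_reverse, List.map_reverse, List.map_map]
    congr 1
    refine List.map_congr_left fun k _ => ?_
    show X - C (y k) = X - C (y' (k : ℕ))
    simp only [hy']
    rw [dif_pos k.isLt, Fin.eta]
  rw [hlist]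
  rcases Nat.eq_zero_or_pos n with h0 | hpos
  · subst h0
    rw [hG0]
    exact (Polynomial.Monic.natDegree_eq_zero hP).mp hdeg
  · obtain ⟨m, rfl⟩ : ∃ m, n = m + 1 := ⟨n - 1, by omega⟩
    have hVfull : IsUnit (vmat x) := hgen m le_rfl id Function.injective_id
    refine eq_of_monic_of_vanish x hVfull P (G (m + 1)) hP (hGmonic _).1 hdeg (hGmonic _).2 ?_
    intro b
    rw [hroots b]
    have := main (m + 1) le_rfl (σ.symm b) (σ.symm b).isLt
    rw [Equiv.apply_symm_apply] at this
    rw [this]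
end

section
/- The set {x_{∅,k} : k = 1,…,n} and the set {x_{{1,…,n}∖{k}, k} : k = 1,…,n} are both sufficient sets in Q_n for the polynomial 𝒫(t): the du-envelope of each of these sets contains a defining set of pseudo-roots of 𝒫(t). -/
open Polynomial

/-- The `du`-envelope of a set `Z ⊆ Qₙ`: the smallest set containing `Z` and closed
under `d`- and `u`-operations on pairs of pseudo-roots. -/
inductive DuEnv (F : Type*) [Field F] (n : ℕ) (Z : Set (Q F n)) : Q F n → Prop
  | base {z : Q F n} : z ∈ Z → DuEnv F n Z z
  | u {A : Finset (Fin n)} {i j : Fin n} (hi : i ∉ A) (hj : j ∉ A) (ξ : Q F n) :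
      DuEnv F n Z (xgen F n A i hi) → DuEnv F n Z (xgen F n A j hj) →
      (xgen F n A i hi - xgen F n A j hj) * xgen F n A i hi =
        ξ * (xgen F n A i hi - xgen F n A j hj) →
      DuEnv F n Z ξ
  | d {A B : Finset (Fin n)} {i j : Fin n} (hi : i ∉ A) (hj : j ∉ B) (η : Q F n) :
      insert i A = insert j B →
      DuEnv F n Z (xgen F n A i hi) → DuEnv F n Z (xgen F n B j hj) →
      (xgen F n A i hi - xgen F n B j hj) * η =
        xgen F n A i hi * (xgen F n A i hi - xgen F n B j hj) →
      DuEnv F n Z η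

/-- A set `Y ⊆ Qₙ` is a defining set of pseudo-roots of `𝒫(t)` if
`𝒫(t) = (t − yₙ)(t − y_{n-1})⋯(t − y₁)` with all `y_k ∈ Y`. -/
def Defining (F : Type*) [Field F] (n : ℕ) (Y : Set (Q F n)) : Prop :=
  ∃ y : Fin n → Q F n, (∀ k, y k ∈ Y) ∧
    calPoly F n =
      ((List.finRange n).reverse.map (fun k => Polynomial.X - Polynomial.C (y k))).prod

/-- A set `Z ⊆ Qₙ` is sufficient if its `du`-envelope contains a defining set of
pseudo-roots of `𝒫(t)`. -/
def Sufficient (F : Type*) [Field F] (n : ℕ) (Z : Set (Q F n)) : Prop :=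
  ∃ Y : Set (Q F n), (∀ q ∈ Y, DuEnv F n Z q) ∧ Defining F n Y

/-!
The additive relation for `(A, i, j)` rearranges to
`x_{A∪{j},i} − x_{A∪{i},j} = x_{A,i} − x_{A,j} =: δ`, and together with the multiplicative
relation this gives `x_{A∪{j},i} · δ = δ · x_{A,i}`. Read one way, this says that `x_{A∪{j},i}` is
obtained from `(x_{A,i}, x_{A,j})` by the u-operation; read the other way, that `x_{A,i}` is
obtained from `(x_{A∪{j},i}, x_{A∪{i},j})` by the d-operation. So u-operations climb from the
generators with `A = ∅` to all generators, and d-operations descend from those with `|A| = n - 1`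
to all generators. Either way the envelope contains the roots `x_{A_k,i_k}` of the factorisation
of `𝒫(t)` for the standard ordering.
-/

namespace Q

variable {F : Type*} [Field F] {n : ℕ}

theorem xgen_insert_add_xgen (A : Finset (Fin n)) (i j : Fin n) (hi : i ∉ A) (hj : j ∉ A)
    (hij : i ≠ j) :
    xgen F n (insert i A) j (notmem_insert hj hij.symm) + xgen F n A i hi =
      xgen F n (insert j A) i (notmem_insert hi hij) + xgen F n A j hj := by
  have h := RingQuot.mkAlgHom_rel F (QRel.add (F := F) A i j hi hj hij)
  rw [map_add, map_add] at h
  exact h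

theorem xgen_insert_mul_xgen (A : Finset (Fin n)) (i j : Fin n) (hi : i ∉ A) (hj : j ∉ A)
    (hij : i ≠ j) :
    xgen F n (insert i A) j (notmem_insert hj hij.symm) * xgen F n A i hi =
      xgen F n (insert j A) i (notmem_insert hi hij) * xgen F n A j hj := by
  have h := RingQuot.mkAlgHom_rel F (QRel.mul (F := F) A i j hi hj hij)
  rw [map_mul, map_mul] at h
  exact h

theorem xgen_insert_sub_xgen_insert (A : Finset (Fin n)) (i j : Fin n) (hi : i ∉ A)
    (hj : j ∉ A) (hij : i ≠ j) :
    xgen F n (insert j A) i (notmem_insert hi hij) -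
        xgen F n (insert i A) j (notmem_insert hj hij.symm) =
      xgen F n A i hi - xgen F n A j hj := by
  rw [sub_eq_sub_iff_add_eq_add, add_comm (xgen F n A i hi)]
  exact (xgen_insert_add_xgen A i j hi hj hij).symm

theorem xgen_insert_mul_sub (A : Finset (Fin n)) (i j : Fin n) (hi : i ∉ A) (hj : j ∉ A)
    (hij : i ≠ j) :
    xgen F n (insert j A) i (notmem_insert hi hij) * (xgen F n A i hi - xgen F n A j hj) =
      (xgen F n A i hi - xgen F n A j hj) * xgen F n A i hi := by
  calc _ = xgen F n (insert j A) i (notmem_insert hi hij) * xgen F n A i hi -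
          xgen F n (insert i A) j (notmem_insert hj hij.symm) * xgen F n A i hi := by
        rw [mul_sub, xgen_insert_mul_xgen A i j hi hj hij]
    _ = _ := by rw [← sub_mul, xgen_insert_sub_xgen_insert A i j hi hj hij]

variable {Z : Set (Q F n)}

theorem duEnv_xgen_insert (A : Finset (Fin n)) (i j : Fin n) (hi : i ∉ A) (hj : j ∉ A)
    (hij : i ≠ j) (hxi : DuEnv F n Z (xgen F n A i hi)) (hxj : DuEnv F n Z (xgen F n A j hj)) :
    DuEnv F n Z (xgen F n (insert j A) i (notmem_insert hi hij)) :=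
  .u hi hj _ hxi hxj (xgen_insert_mul_sub A i j hi hj hij).symm

theorem duEnv_xgen_of_insert (A : Finset (Fin n)) (i j : Fin n) (hi : i ∉ A) (hj : j ∉ A)
    (hij : i ≠ j) (hxi : DuEnv F n Z (xgen F n (insert j A) i (notmem_insert hi hij)))
    (hxj : DuEnv F n Z (xgen F n (insert i A) j (notmem_insert hj hij.symm))) :
    DuEnv F n Z (xgen F n A i hi) := by
  refine .d _ _ _ (Finset.insert_comm i j A) hxi hxj ?_
  rw [xgen_insert_sub_xgen_insert A i j hi hj hij]
  exact (xgen_insert_mul_sub A i j hi hj hij).symm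

theorem sufficient_of_forall_duEnv_xgen
    (hZ : ∀ (A : Finset (Fin n)) (i : Fin n) (hi : i ∉ A), DuEnv F n Z (xgen F n A i hi)) :
    Sufficient F n Z :=
  ⟨Set.range fun k => xgen F n ((Finset.Iio k).image (1 : Equiv.Perm (Fin n))) k
      (sigma_notmem 1 k),
    by rintro _ ⟨k, rfl⟩; exact hZ _ _ _, _, Set.mem_range_self, rfl⟩

theorem duEnv_xgen_of_empty (A : Finset (Fin n)) (i : Fin n) (hi : i ∉ A) :
    DuEnv F n {q | ∃ k : Fin n, q = xgen F n ∅ k (Finset.notMem_empty k)}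
      (xgen F n A i hi) := by
  induction A using Finset.induction_on generalizing i with
  | empty => exact .base ⟨i, rfl⟩
  | @insert j A hj ih =>
    have hij : i ≠ j := by rintro rfl; exact hi (Finset.mem_insert_self i A)
    exact duEnv_xgen_insert A i j (fun h => hi (Finset.mem_insert_of_mem h)) hj hij
      (ih _ _) (ih _ _)

theorem duEnv_xgen_of_erase (A : Finset (Fin n)) (i : Fin n) (hi : i ∉ A) :
    DuEnv F n
      {q | ∃ k : Fin n, q = xgen F n (Finset.univ.erase k) k (Finset.notMem_erase k _)}
      (xgen F n A i hi) := by
  induction A using WellFoundedGT.induction generalizing i with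
  | ind A ih =>
    by_cases hAi : insert i A = Finset.univ
    · obtain rfl : A = Finset.univ.erase i := by
        rw [← hAi, Finset.erase_insert hi]
      exact .base ⟨i, rfl⟩
    · obtain ⟨j, hj⟩ : ∃ j, j ∉ insert i A :=
        not_forall.mp (mt Finset.eq_univ_iff_forall.mpr hAi)
      have hjA : j ∉ A := fun h => hj (Finset.mem_insert_of_mem h)
      have hij : i ≠ j := by rintro rfl; exact hj (Finset.mem_insert_self i A)
      exact duEnv_xgen_of_insert A i j hi hjA hij
        (ih _ (Finset.ssubset_insert hjA) _ _) (ih _ (Finset.ssubset_insert hi) _ _)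

end Q

/-- The sets `{x_{∅,k} : k}` and `{x_{{1,…,n}∖{k},k} : k}` are sufficient in `Qₙ` for `𝒫(t)`. -/
theorem stmt7 (F : Type*) [Field F] (n : ℕ) :
    Sufficient F n {q | ∃ k : Fin n, q = xgen F n ∅ k (Finset.notMem_empty k)} ∧
    Sufficient F n
      {q | ∃ k : Fin n, q = xgen F n (Finset.univ.erase k) k (Finset.notMem_erase k _)} :=
  ⟨Q.sufficient_of_forall_duEnv_xgen Q.duEnv_xgen_of_empty,
    Q.sufficient_of_forall_duEnv_xgen Q.duEnv_xgen_of_erase⟩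
end

section
/- Let R be a unital associative F-algebra, P(t) ∈ R[t] monic of degree n, and S a set of pseudo-roots of P(t) containing elements a_1,…,a_n with P(t) = (t − a_1)(t − a_2)⋯(t − a_n). Let Γ(P,S) be the layered graph of right divisors of P with respect to S, let A(Γ(P,S)) be its associated algebra and 𝒫(t) ∈ A(Γ(P,S))[t] its associated polynomial (defined via any directed path from the source P(t) to the sink 1). Then there exists an F-algebra homomorphism α : A(Γ(P,S)) → R sending each edge (B_1, B_2, x) to x, and the induced homomorphism A(Γ(P,S))[t] → R[t] maps 𝒫(t) to P(t). -/
/-! A right divisor chain `P = (t - x₁)⋯(t - x_k)·B` along a path of `Γ(P,S)` telescopes, and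
since the end vertex `B` is monic it can be cancelled on the right. Hence in `R` the products
`(t - x₁)⋯(t - x_k)` along any two paths with common ends coincide, so the labelling of edges by
their pseudo-roots respects the defining relations of `A(Γ(P,S))`; along a path from `P` to `1`
the same telescoping gives `P` itself. -/

open Polynomial

/-- A directed graph: a set `V` of vertices, a set `E` of edges, and tail/head maps. -/
structure DGraph (V E : Type*) where
  tl : E → V
  hd : E → V

namespace DGraph

variable {V E : Type*} (G : DGraph V E)

/-- `DPath G u l v`: the list of edges `l` is a positive (directed) path from `u` to `v`. -/
inductive DPath : V → List E → V → Prop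
  | nil (v : V) : DPath v [] v
  | cons (e : E) {w : V} {l : List E} : DPath (G.hd e) l w → DPath (G.tl e) (e :: l) w

/-- There is a positive path from `u` to `v`. -/
def Reach (u v : V) : Prop := ∃ l : List E, G.DPath u l v

/-- A source is a vertex which is not the head of any edge. -/
def IsSource (v : V) : Prop := ∀ e : E, G.hd e ≠ v

/-- A sink is a vertex which is not the tail of any edge. -/
def IsSink (v : V) : Prop := ∀ e : E, G.tl e ≠ v

/-- A graph is simple if edges are determined by their endpoints. -/
def Simple : Prop := ∀ e f : E, G.tl e = G.tl f → G.hd e = G.hd f → e = f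

/-- A graph is acyclic if there is no nonempty directed path from a vertex to itself. -/
def Acyclic : Prop := ∀ (v : V) (l : List E), G.DPath v l v → l = []

/-- A graph is layered if it admits a rank function decreasing by 1 along each edge. -/
def Layered : Prop := ∃ r : V → ℕ, ∀ e : E, r (G.tl e) = r (G.hd e) + 1

/-- A graph is modular if any two edges with a common tail can be completed downwards to a
diamond, and any two edges with a common head can be completed upwards to a diamond. -/
def Modular : Prop :=
  (∀ e₁ e₂ : E, G.tl e₁ = G.tl e₂ →
    ∃ f₁ f₂ : E, G.hd f₁ = G.hd f₂ ∧ G.hd e₁ = G.tl f₁ ∧ G.hd e₂ = G.tl f₂) ∧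
  (∀ f₁ f₂ : E, G.hd f₁ = G.hd f₂ →
    ∃ e₁ e₂ : E, G.tl e₁ = G.tl e₂ ∧ G.hd e₁ = G.tl f₁ ∧ G.hd e₂ = G.tl f₂)

/-- A set of edges `E₀` is complete if it is closed under `D`- and `U`-operations:
whenever `e₁, e₂, f₁, f₂` form a diamond (`t(e₁) = t(e₂)`, `h(f₁) = h(f₂)`,
`h(eᵢ) = t(fᵢ)`), if `e₁, e₂ ∈ E₀` then `f₁, f₂ ∈ E₀`, and if `f₁, f₂ ∈ E₀` then
`e₁, e₂ ∈ E₀`. -/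
def CompleteSet (E₀ : Set E) : Prop :=
  (∀ e₁ e₂ f₁ f₂ : E, e₁ ∈ E₀ → e₂ ∈ E₀ → G.tl e₁ = G.tl e₂ → G.hd f₁ = G.hd f₂ →
    G.hd e₁ = G.tl f₁ → G.hd e₂ = G.tl f₂ → f₁ ∈ E₀ ∧ f₂ ∈ E₀) ∧
  (∀ e₁ e₂ f₁ f₂ : E, f₁ ∈ E₀ → f₂ ∈ E₀ → G.tl e₁ = G.tl e₂ → G.hd f₁ = G.hd f₂ →
    G.hd e₁ = G.tl f₁ → G.hd e₂ = G.tl f₂ → e₁ ∈ E₀ ∧ e₂ ∈ E₀)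

/-- The set of all heads and tails of edges in `E₀`. -/
def VertexOf (E₀ : Set E) : Set V := {v | ∃ e ∈ E₀, G.tl e = v ∨ G.hd e = v}

/-- One step of a walk traversing an edge of `E₀` in either direction. -/
def EdgeStep (E₀ : Set E) (v w : V) : Prop :=
  ∃ e ∈ E₀, (G.tl e = v ∧ G.hd e = w) ∨ (G.tl e = w ∧ G.hd e = v)

/-- A set of edges is connected if any two of its vertices are joined by a walk
traversing its edges in either direction. -/
def ConnectedEdges (E₀ : Set E) : Prop :=
  ∀ v ∈ G.VertexOf E₀, ∀ w ∈ G.VertexOf E₀, Relation.ReflTransGen (G.EdgeStep E₀) v w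

/-- A set of vertices `W` is ample if for every non-sink `v` there is `u ∈ W` with no
positive path from `u` to `v`, and for every non-source `v` there is `w ∈ W` with no
positive path from `v` to `w`. -/
def AmpleVerts (W : Set V) : Prop :=
  (∀ v : V, ¬ G.IsSink v → ∃ u ∈ W, ¬ G.Reach u v) ∧
  (∀ v : V, ¬ G.IsSource v → ∃ w ∈ W, ¬ G.Reach v w)

/-- A set of edges is ample if the set of its tails and heads is ample. -/
def AmpleEdges (E₀ : Set E) : Prop := G.AmpleVerts (G.VertexOf E₀)

end DGraph

/-- `U_π(t) = (t − e₁)(t − e₂)⋯(t − e_k) ∈ T(E)[t]` for a path `π = (e₁,…,e_k)`. -/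
noncomputable def Upoly (F : Type*) [Field F] {E : Type*} (l : List E) :
    Polynomial (FreeAlgebra F E) :=
  (l.map (fun e => Polynomial.X - Polynomial.C (FreeAlgebra.ι F e))).prod

/-- The relations of `A(Γ)`: corresponding coefficients of `U_{π₁}(t)` and `U_{π₂}(t)`
are identified, for any two directed paths `π₁, π₂` with the same tail and the same
head. -/
inductive PathRel (F : Type*) [Field F] {V E : Type*} (G : DGraph V E) :
    FreeAlgebra F E → FreeAlgebra F E → Prop
  | rel {u v : V} {l₁ l₂ : List E} (h₁ : G.DPath u l₁ v) (h₂ : G.DPath u l₂ v)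
      (hne₁ : l₁ ≠ []) (hne₂ : l₂ ≠ []) (m : ℕ) :
      PathRel F G ((Upoly F l₁).coeff m) ((Upoly F l₂).coeff m)

/-- The algebra `A(Γ)` associated with a directed graph `Γ`: the quotient of the free
algebra `T(E)` by the two-sided ideal generated by the differences of corresponding
coefficients of `U_{π₁}(t)` and `U_{π₂}(t)`. -/
def AGraph (F : Type*) [Field F] {V E : Type*} (G : DGraph V E) : Type _ :=
  RingQuot (PathRel F G)

noncomputable instance (F : Type*) [Field F] {V E : Type*} (G : DGraph V E) :
    Ring (AGraph F G) :=
  inferInstanceAs (Ring (RingQuot (PathRel F G)))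

noncomputable instance (F : Type*) [Field F] {V E : Type*} (G : DGraph V E) :
    Algebra F (AGraph F G) :=
  inferInstanceAs (Algebra F (RingQuot (PathRel F G)))

/-- The image in `A(Γ)` of an edge `e`. -/
noncomputable def aedge (F : Type*) [Field F] {V E : Type*} (G : DGraph V E) (e : E) :
    AGraph F G :=
  RingQuot.mkAlgHom F (PathRel F G) (FreeAlgebra.ι F e)

/-- The polynomial `(t − e₁)⋯(t − e_k) ∈ A(Γ)[t]` associated with a list of edges. -/
noncomputable def UpolyA (F : Type*) [Field F] {V E : Type*} (G : DGraph V E)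
    (l : List E) : Polynomial (AGraph F G) :=
  (l.map (fun e => Polynomial.X - Polynomial.C (aedge F G e))).prod

/-- Vertices of the graph `Γ(P,S)` of right divisors: monic polynomials dividing `P`
from the right. -/
abbrev DivVert {R : Type*} [Ring R] (P : Polynomial R) : Type _ :=
  {B : Polynomial R // B.Monic ∧ ∃ Q : Polynomial R, P = Q * B}

/-- Edges of `Γ(P,S)`: triples `(B₁, B₂, x)` with `x ∈ S` and `B₁ = (t − x)·B₂`. -/
abbrev DivEdge {R : Type*} [Ring R] (P : Polynomial R) (S : Set R) : Type _ :=
  {T : DivVert P × DivVert P × R //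
    T.2.2 ∈ S ∧
      (T.1 : Polynomial R) = (Polynomial.X - Polynomial.C T.2.2) * (T.2.1 : Polynomial R)}

/-- The layered graph `Γ(P,S)` of right divisors of `P` with respect to a set `S` of
pseudo-roots: the edge `(B₁, B₂, x)` has tail `B₁` and head `B₂`. -/
def divGraph {R : Type*} [Ring R] (P : Polynomial R) (S : Set R) :
    DGraph (DivVert P) (DivEdge P S) :=
  ⟨fun e => e.1.1, fun e => e.1.2.1⟩

noncomputable def edgeProd {E R : Type*} [Ring R] (f : E → R) (l : List E) : R[X] :=
  (l.map fun e => X - C (f e)).prod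

theorem map_edgeProd {E R T : Type*} [Ring R] [Ring T] (φ : R →+* T) (f : E → R)
    (l : List E) : (edgeProd f l).map φ = edgeProd (φ ∘ f) l := by
  simp [edgeProd, Polynomial.map_list_prod, Function.comp_def]

theorem FreeAlgebra.lift_coeff_Upoly (F : Type*) [Field F] {E R : Type*} [Ring R] [Algebra F R]
    (f : E → R) (l : List E) (m : ℕ) :
    FreeAlgebra.lift F f ((Upoly F l).coeff m) = (edgeProd f l).coeff m :=
  calc FreeAlgebra.lift F f ((Upoly F l).coeff m)
      = ((edgeProd (FreeAlgebra.ι F) l).map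
          (FreeAlgebra.lift F f : FreeAlgebra F E →+* R)).coeff m :=
        (coeff_map _ m).symm
    _ = (edgeProd f l).coeff m := by
        rw [map_edgeProd]
        exact congrArg (fun g => (edgeProd g l).coeff m) (funext (FreeAlgebra.lift_ι_apply f))

def DGraph.EdgeProdCompatible {V E R : Type*} [Ring R] (G : DGraph V E) (f : E → R) : Prop :=
  ∀ ⦃u v l₁ l₂⦄, G.DPath u l₁ v → G.DPath u l₂ v → l₁ ≠ [] → l₂ ≠ [] →
    edgeProd f l₁ = edgeProd f l₂

namespace AGraph

variable (F : Type*) [Field F] {V E : Type*} (G : DGraph V E) {R : Type*} [Ring R] [Algebra F R]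

noncomputable def lift (f : E → R) (hf : G.EdgeProdCompatible f) : AGraph F G →ₐ[F] R :=
  RingQuot.liftAlgHom F ⟨FreeAlgebra.lift F f, fun _ _ ⟨h₁, h₂, hne₁, hne₂, m⟩ => by
    simp only [FreeAlgebra.lift_coeff_Upoly, hf h₁ h₂ hne₁ hne₂]⟩

variable {F G} {f : E → R} {hf : G.EdgeProdCompatible f}

theorem lift_aedge (e : E) : lift F G f hf (aedge F G e) = f e :=
  (RingQuot.liftAlgHom_mkAlgHom_apply F _ _ _).trans (FreeAlgebra.lift_ι_apply f e)

theorem map_lift_UpolyA (l : List E) :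
    (UpolyA F G l).map (lift F G f hf : AGraph F G →+* R) = edgeProd f l := by
  rw [UpolyA, ← edgeProd, map_edgeProd]
  exact congrArg (edgeProd · l) (funext lift_aedge)

end AGraph

namespace divGraph

variable {R : Type*} [Ring R] {P : R[X]} {S : Set R}

theorem edgeProd_mul_of_dPath {u v : DivVert P} {l : List (DivEdge P S)}
    (h : (divGraph P S).DPath u l v) :
    edgeProd (fun e : DivEdge P S => e.1.2.2) l * v.1 = u.1 := by
  induction h with
  | nil => simp [edgeProd]
  | cons e _ ih =>
    rw [edgeProd, List.map_cons, List.prod_cons, mul_assoc, ← edgeProd, ih]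
    exact e.2.2.symm

theorem edgeProdCompatible : (divGraph P S).EdgeProdCompatible fun e => e.1.2.2 :=
  fun _ v _ _ h₁ h₂ _ _ =>
    v.2.1.isRegular.right <| (edgeProd_mul_of_dPath h₁).trans (edgeProd_mul_of_dPath h₂).symm

end divGraph

theorem stmt12_general (F : Type*) [Field F] {R : Type*} [Ring R] [Algebra F R]
    (P : Polynomial R) (hP : P.Monic)
    (S : Set R) :
    ∃ α : AGraph F (divGraph P S) →ₐ[F] R,
      (∀ e : DivEdge P S, α (aedge F (divGraph P S) e) = e.1.2.2) ∧
      ∀ l : List (DivEdge P S),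
        (divGraph P S).DPath ⟨P, hP, 1, (one_mul P).symm⟩ l
          ⟨1, Polynomial.monic_one, P, (mul_one P).symm⟩ →
        Polynomial.map (α : AGraph F (divGraph P S) →+* R) (UpolyA F (divGraph P S) l)
          = P := by
  refine ⟨AGraph.lift F (divGraph P S) _ divGraph.edgeProdCompatible, AGraph.lift_aedge,
    fun l hl => ?_⟩
  rw [AGraph.map_lift_UpolyA]
  simpa only [mul_one] using divGraph.edgeProd_mul_of_dPath hl

/-- Universality of `A(Γ)`: if `P(t) ∈ R[t]` is monic of degree `n`, `S` is a set of
pseudo-roots of `P` containing `a₁,…,aₙ` with `P(t) = (t−a₁)⋯(t−aₙ)`, then there is a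
canonical homomorphism `α : A(Γ(P,S)) → R` sending each edge `(B₁,B₂,x)` to `x`, whose
induced homomorphism on polynomials maps `𝒫(t)` to `P(t)`. -/
theorem stmt12 (F : Type*) [Field F] {R : Type*} [Ring R] [Algebra F R]
    (n : ℕ) (P : Polynomial R) (hP : P.Monic) (hdeg : P.natDegree = n)
    (S : Set R)
    (hS : ∀ x ∈ S, ∃ Q₁ Q₂ : Polynomial R,
      P = Q₁ * (Polynomial.X - Polynomial.C x) * Q₂)
    (a : Fin n → R) (ha : ∀ k, a k ∈ S)
    (hfact : P = ((List.finRange n).map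
      (fun k => Polynomial.X - Polynomial.C (a k))).prod) :
    ∃ α : AGraph F (divGraph P S) →ₐ[F] R,
      (∀ e : DivEdge P S, α (aedge F (divGraph P S) e) = e.1.2.2) ∧
      ∀ l : List (DivEdge P S),
        (divGraph P S).DPath ⟨P, hP, 1, (one_mul P).symm⟩ l
          ⟨1, Polynomial.monic_one, P, (mul_one P).symm⟩ →
        Polynomial.map (α : AGraph F (divGraph P S) →+* R) (UpolyA F (divGraph P S) l)
          = P :=
  stmt12_general F P hP S
end

section
/- In the graph Γ_n, any set of n edges {(A_1,i_1), (A_2,i_2), …, (A_n,i_n)} with i_1, i_2, …, i_n pairwise distinct is ample. -/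
/-!
A positive path in `Γₙ` only removes elements, so `u` reaches `v` only if `v ⊆ u`. Being
injective on `Fin n`, `k ↦ i_k` is onto, so every `j` is some `i_k`: it is missed by the head
`A_k` and lies in the tail `A_k ∪ {i_k}`. A non-sink `v` contains some `j`, and the head missing
it cannot reach `v`; a non-source `v` misses some `j`, and cannot reach the tail containing it.
-/

open Polynomial

/-- The graph `Γₙ`: vertices are the subsets of `{1,…,n}` and the edge `(A,i)` has tail
`A ∪ {i}` and head `A`. -/
def GammaN (n : ℕ) : DGraph (Finset (Fin n)) (QGen n) :=
  ⟨fun e => insert e.1.2 e.1.1, fun e => e.1.1⟩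

namespace GammaN

variable {n : ℕ}

theorem subset_of_dPath {u v : Finset (Fin n)} {l : List (QGen n)}
    (hp : (GammaN n).DPath u l v) : v ⊆ u := by
  induction hp with
  | nil => exact subset_rfl
  | cons e _ ih => exact ih.trans (Finset.subset_insert _ _)

theorem subset_of_reach {u v : Finset (Fin n)} (h : (GammaN n).Reach u v) : v ⊆ u :=
  let ⟨_, hp⟩ := h
  subset_of_dPath hp

theorem nonempty_of_not_isSink {v : Finset (Fin n)} (hv : ¬ (GammaN n).IsSink v) :
    v.Nonempty := by
  rw [Finset.nonempty_iff_ne_empty]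
  rintro rfl
  exact hv fun _ => Finset.insert_ne_empty _ _

theorem exists_notMem_of_not_isSource {v : Finset (Fin n)} (hv : ¬ (GammaN n).IsSource v) :
    ∃ j, j ∉ v := by
  by_contra! hc
  exact hv fun e he => e.2 (he.symm ▸ hc e.1.2 : e.1.2 ∈ (GammaN n).hd e)

theorem ampleVerts_of_forall_notMem_of_forall_mem {W : Set (Finset (Fin n))}
    (hout : ∀ j, ∃ u ∈ W, j ∉ u) (hin : ∀ j, ∃ w ∈ W, j ∈ w) : (GammaN n).AmpleVerts W := by
  constructor
  · intro v hv
    obtain ⟨j, hjv⟩ := nonempty_of_not_isSink hv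
    obtain ⟨u, huW, hju⟩ := hout j
    exact ⟨u, huW, fun hr => hju (subset_of_reach hr hjv)⟩
  · intro v hv
    obtain ⟨j, hjv⟩ := exists_notMem_of_not_isSource hv
    obtain ⟨w, hwW, hjw⟩ := hin j
    exact ⟨w, hwW, fun hr => hjv (subset_of_reach hr hjw)⟩

end GammaN

/-- In `Γₙ`, any set of `n` edges `{(A₁,i₁),…,(Aₙ,iₙ)}` with `i₁,…,iₙ` pairwise distinct
is ample. -/
theorem stmt14 (n : ℕ) (A : Fin n → Finset (Fin n)) (i : Fin n → Fin n)
    (h : ∀ k, i k ∉ A k) (hinj : Function.Injective i) :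
    (GammaN n).AmpleEdges {e | ∃ k : Fin n, e = ⟨(A k, i k), h k⟩} := by
  have hsurj : Function.Surjective i := Finite.surjective_of_injective hinj
  apply GammaN.ampleVerts_of_forall_notMem_of_forall_mem
  · intro j
    obtain ⟨k, rfl⟩ := hsurj j
    exact ⟨A k, ⟨_, ⟨k, rfl⟩, Or.inr rfl⟩, h k⟩
  · intro j
    obtain ⟨k, rfl⟩ := hsurj j
    exact ⟨insert (i k) (A k), ⟨_, ⟨k, rfl⟩, Or.inl rfl⟩, Finset.mem_insert_self _ _⟩
end

section
/- Let Γ = (V,E) be a simple, acyclic, modular directed graph and let F ⊆ E be a complete connected set of edges. Let u, v be vertices among the heads and tails of edges of F such that there is no positive path from u to v using only edges of F. Then (1) there exists an edge f ∈ F with t(f) = v, and (2) there exists an edge e ∈ F with h(e) = u. -/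
open Polynomial

namespace Stmt15Aux

variable {V E : Type*} (G : DGraph V E)

open DGraph

/-- Reachability by a positive path all of whose edges lie in `F₀`. -/
def RP (F₀ : Set E) (a b : V) : Prop :=
  ∃ l : List E, G.DPath a l b ∧ ∀ e ∈ l, e ∈ F₀

lemma dpath_append {u v w : V} {l l' : List E} (h : G.DPath u l v) :
    G.DPath v l' w → G.DPath u (l ++ l') w := by
  induction h with
  | nil => exact fun h' => h'
  | cons e _ ih => exact fun h' => DPath.cons e (ih h')

lemma rp_refl (F₀ : Set E) (a : V) : RP G F₀ a a :=
  ⟨[], DPath.nil a, by simp⟩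

lemma rp_trans {F₀ : Set E} {a b c : V} (h : RP G F₀ a b) (h' : RP G F₀ b c) :
    RP G F₀ a c := by
  obtain ⟨l, hp, hl⟩ := h
  obtain ⟨l', hp', hl'⟩ := h'
  refine ⟨l ++ l', dpath_append G hp hp', ?_⟩
  intro e he
  rcases List.mem_append.1 he with h | h
  · exact hl e h
  · exact hl' e h

lemma rp_cons {F₀ : Set E} {b : V} (e : E) (he : e ∈ F₀) (h : RP G F₀ (G.hd e) b) :
    RP G F₀ (G.tl e) b := by
  obtain ⟨l, hp, hl⟩ := h
  refine ⟨e :: l, DPath.cons e hp, ?_⟩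
  intro f hf
  rcases List.mem_cons.1 hf with h | h
  · exact h ▸ he
  · exact hl f h

lemma rp_single {F₀ : Set E} (e : E) (he : e ∈ F₀) : RP G F₀ (G.tl e) (G.hd e) :=
  rp_cons G e he (rp_refl G F₀ _)

/-- Pushing an edge with the same tail along a path: downward confluence of a single
edge against a path, using modularity (D-direction) and completeness. -/
lemma pushD (hmod : G.Modular) {F₀ : Set E} (hcomp : G.CompleteSet F₀)
    {x m : V} {l : List E} (hp : G.DPath x l m) :
    (∀ e' ∈ l, e' ∈ F₀) → ∀ e : E, e ∈ F₀ → G.tl e = x →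
    ∃ m', RP G F₀ (G.hd e) m' ∧ RP G F₀ m m' := by
  induction hp with
  | nil w =>
    intro _ e he hx
    refine ⟨G.hd e, rp_refl G F₀ _, ?_⟩
    have := rp_single G e he
    rwa [hx] at this
  | cons e' hp' ih =>
    intro hl e he hx
    obtain ⟨f₁, f₂, hff, hf₁, hf₂⟩ := hmod.1 e e' hx
    obtain ⟨hf₁F, hf₂F⟩ := hcomp.1 e e' f₁ f₂ he (hl e' List.mem_cons_self) hx hff hf₁ hf₂
    obtain ⟨m', hm'1, hm'2⟩ := ih (fun x hx => hl x (List.mem_cons_of_mem _ hx)) f₂ hf₂F hf₂.symm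
    refine ⟨m', ?_, hm'2⟩
    rw [hf₁]
    refine rp_cons G f₁ hf₁F ?_
    rwa [hff]

/-- Downward confluence: any walk in `F₀` can be joined below. -/
lemma conflD (hmod : G.Modular) {F₀ : Set E} (hcomp : G.CompleteSet F₀)
    {a b : V} (h : Relation.ReflTransGen (G.EdgeStep F₀) a b) :
    ∃ m : V, RP G F₀ a m ∧ RP G F₀ b m := by
  induction h with
  | refl => exact ⟨a, rp_refl G F₀ a, rp_refl G F₀ a⟩
  | tail _ hbc ih =>
    obtain ⟨m, ham, hbm⟩ := ih
    obtain ⟨e, heF, hcase⟩ := hbc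
    rcases hcase with ⟨ht, hh⟩ | ⟨ht, hh⟩
    · obtain ⟨l, hp, hl⟩ := hbm
      obtain ⟨m', h1, h2⟩ := pushD G hmod hcomp hp hl e heF ht
      rw [hh] at h1
      exact ⟨m', rp_trans G ham h2, h1⟩
    · refine ⟨m, ham, ?_⟩
      rw [← ht]
      refine rp_cons G e heF ?_
      rwa [hh]

/-- The opposite graph. -/
def op : DGraph V E := ⟨G.hd, G.tl⟩

lemma op_modular (h : G.Modular) : (op G).Modular := by
  constructor
  · intro e₁ e₂ he
    obtain ⟨a₁, a₂, h1, h2, h3⟩ := h.2 e₁ e₂ he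
    exact ⟨a₁, a₂, h1, h2.symm, h3.symm⟩
  · intro f₁ f₂ hf
    obtain ⟨a₁, a₂, h1, h2, h3⟩ := h.1 f₁ f₂ hf
    exact ⟨a₁, a₂, h1, h2.symm, h3.symm⟩

lemma op_complete {F₀ : Set E} (h : G.CompleteSet F₀) : (op G).CompleteSet F₀ := by
  constructor
  · intro e₁ e₂ f₁ f₂ h1 h2 h3 h4 h5 h6
    exact h.2 f₁ f₂ e₁ e₂ h1 h2 h4 h3 h5.symm h6.symm
  · intro e₁ e₂ f₁ f₂ h1 h2 h3 h4 h5 h6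
    exact h.1 f₁ f₂ e₁ e₂ h1 h2 h4 h3 h5.symm h6.symm

lemma op_edgestep {F₀ : Set E} {a b : V} (h : G.EdgeStep F₀ a b) :
    (op G).EdgeStep F₀ a b := by
  obtain ⟨e, he, hc⟩ := h
  exact ⟨e, he, (Or.symm hc).imp And.symm And.symm⟩

lemma op_dpath {a b : V} {l : List E} (h : (op G).DPath a l b) :
    G.DPath b l.reverse a := by
  induction h with
  | nil => exact DPath.nil _
  | cons e _ ih =>
    rw [List.reverse_cons]
    exact dpath_append G ih (DPath.cons e (DPath.nil _))

lemma op_rp {F₀ : Set E} {a b : V} (h : RP (op G) F₀ a b) : RP G F₀ b a := by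
  obtain ⟨l, hp, hl⟩ := h
  exact ⟨l.reverse, op_dpath G hp, fun e he => hl e (List.mem_reverse.1 he)⟩

lemma first_edge {F₀ : Set E} {a b : V} (h : RP G F₀ a b) (hne : a ≠ b) :
    ∃ e ∈ F₀, G.tl e = a := by
  obtain ⟨l, hp, hl⟩ := h
  cases hp with
  | nil => exact absurd rfl hne
  | cons e hp' => exact ⟨e, hl e List.mem_cons_self, rfl⟩

end Stmt15Aux

/-- Let `Γ` be a simple acyclic modular directed graph and `F₀` a complete connected set
of edges. If `u, v` are vertices of `F₀` and there is no positive path from `u` to `v`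
using only edges of `F₀`, then some edge of `F₀` has tail `v` and some edge of `F₀` has
head `u`. -/
theorem stmt15 {V E : Type*} (G : DGraph V E)
    (hsimple : G.Simple) (hacyclic : G.Acyclic) (hmodular : G.Modular)
    (F₀ : Set E) (hcomplete : G.CompleteSet F₀) (hconn : G.ConnectedEdges F₀)
    (u v : V) (hu : u ∈ G.VertexOf F₀) (hv : v ∈ G.VertexOf F₀)
    (hpath : ¬ ∃ l : List E, G.DPath u l v ∧ ∀ e ∈ l, e ∈ F₀) :
    (∃ f ∈ F₀, G.tl f = v) ∧ (∃ e ∈ F₀, G.hd e = u) := by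
  have hRuv : ¬ Stmt15Aux.RP G F₀ u v := hpath
  have hwalk : Relation.ReflTransGen (G.EdgeStep F₀) u v := hconn u hu v hv
  constructor
  · obtain ⟨m, hum, hvm⟩ := Stmt15Aux.conflD G hmodular hcomplete hwalk
    have hne : v ≠ m := fun h => hRuv (h ▸ hum)
    exact Stmt15Aux.first_edge G hvm hne
  · have hwalk' : Relation.ReflTransGen ((Stmt15Aux.op G).EdgeStep F₀) u v :=
      Relation.ReflTransGen.mono (fun a b h => Stmt15Aux.op_edgestep G h) u v hwalk
    obtain ⟨m, hum, hvm⟩ := Stmt15Aux.conflD (Stmt15Aux.op G)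
      (Stmt15Aux.op_modular G hmodular) (Stmt15Aux.op_complete G hcomplete) hwalk'
    have hne : u ≠ m := by
      intro h
      exact hRuv (Stmt15Aux.op_rp G (h ▸ hvm))
    exact Stmt15Aux.first_edge (Stmt15Aux.op G) hum hne
end
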